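/- Let n ≥ 1, let G be a simple graph on Fin n with Laplacian matrix L (over ℝ) and degree vector d, and let D be a real n×n matrix with zero diagonal. Then the identity L·D + 2·I = (2·1 − d)·1ᵀ holds if and only if G is a tree and D is its distance matrix (D i j = dist_G(i, j) for all i, j). Thus the bilinear matrix equation characterizes trees in terms of their Laplacian and distance matrices. -/

import Mathlib

open Matrix Finset

/-!
Multiplying the identity on the left by `xᵀ`, for `x` in the kernel of the symmetric matrix `L`,
kills `xᵀ L D` and leaves `2 x_j = ∑ᵢ xᵢ (2 - dᵢ)` for every `j`. The indicator of a connected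
component is such an `x`, which forces `G` to be connected; `x = 1` gives `∑ᵢ (2 - dᵢ) = 2`, i.e.
`|E| = n - 1`, so `G` is a tree. In a tree, every neighbour of `i ≠ j` is one step farther from
`j` than `i`, except the second vertex of the path from `i` to `j`; this gives the identity for the
distance matrix. Then `L (D - dist) = 0`, so every column of `D - dist` is constant, and the zero
diagonal makes it vanish.
-/

namespace Matrix

variable {n R : Type*} [Fintype n] [DecidableEq n] [CommSemiring R]

theorem IsSymm.mul_eq_dotProduct_of_mulVec_eq_zero {M D : Matrix n n R}
    {a x : n → R} {c : R} (hM : M.IsSymm) (hx : M *ᵥ x = 0)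
    (h : M * D + c • 1 = vecMulVec a fun _ => 1) (j : n) : c * x j = x ⬝ᵥ a := by
  have hxM : x ᵥ* M = 0 := by rw [← hM.eq, vecMul_transpose, hx]
  have := congrFun (congrArg (x ᵥ* ·) h) j
  simpa [vecMul_add, ← vecMul_vecMul, hxM, vecMul_smul, vecMul_one, vecMul_vecMulVec] using this

end Matrix

namespace SimpleGraph

variable {V : Type*} {G : SimpleGraph V}

theorem Walk.dist_snd_add_one {i j : V} {p : G.Walk i j} (hp : p.length = G.dist i j)
    (hij : i ≠ j) : G.dist p.snd j + 1 = G.dist i j := by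
  have hnil : ¬ p.Nil := Walk.not_nil_of_ne hij
  have hadj := p.adj_snd hnil
  have hle := dist_le p.tail
  have hge := hadj.reachable.dist_triangle_left j
  rw [dist_eq_one_iff_adj.mpr hadj] at hge
  have := p.length_tail_add_one hnil
  omega

theorem IsTree.eq_snd_of_adj_of_dist_add_one (hG : G.IsTree) {i j k : V} {p : G.Walk i j}
    (hp : p.IsPath) (hk : G.Adj i k) (hd : G.dist k j + 1 = G.dist i j) : k = p.snd := by
  obtain ⟨q, hq⟩ := (hG.connected k j).exists_walk_length_eq_dist
  have hpath : (q.cons hk).IsPath := (q.cons hk).isPath_of_length_eq_dist (by simp [hq, hd])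
  have : q.cons hk = p :=
    congrArg Subtype.val ((hG.isAcyclic.subsingleton_path i j).elim ⟨_, hpath⟩ ⟨p, hp⟩)
  rw [← this, Walk.snd_cons]

theorem IsTree.dist_eq_add_one_of_adj_of_ne_snd (hG : G.IsTree) {i j k : V} {p : G.Walk i j}
    (hp : p.IsPath) (hk : G.Adj i k) (hne : k ≠ p.snd) : G.dist k j = G.dist i j + 1 := by
  have h := hG.dist_eq_dist_add_one_of_adj j hk
  rw [G.dist_comm (u := j), G.dist_comm (u := j)] at h
  exact h.resolve_left fun h => hne (hG.eq_snd_of_adj_of_dist_add_one hp hk h.symm)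

variable [Fintype V] [DecidableRel G.Adj]

theorem sum_dist_neighborFinset_self (i : V) :
    ∑ k ∈ G.neighborFinset i, (G.dist k i : ℝ) = G.degree i := by
  rw [sum_congr rfl fun k hk => by
      rw [dist_eq_one_iff_adj.mpr ((mem_neighborFinset G i k).mp hk).symm, Nat.cast_one],
    sum_const, card_neighborFinset_eq_degree, nsmul_one]

theorem IsTree.sum_dist_neighborFinset (hG : G.IsTree) {i j : V} (hij : i ≠ j) :
    ∑ k ∈ G.neighborFinset i, (G.dist k j : ℝ) = G.degree i * (G.dist i j + 1) - 2 := by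
  classical
  obtain ⟨p, hp, hlen⟩ := hG.connected.exists_path_of_dist i j
  have hsnd : p.snd ∈ G.neighborFinset i := by simpa using p.adj_snd (Walk.not_nil_of_ne hij)
  have hfar : ∀ k ∈ (G.neighborFinset i).erase p.snd, (G.dist k j : ℝ) = G.dist i j + 1 :=
    fun k hk => by
      obtain ⟨hne, hk⟩ := mem_erase.mp hk
      exact_mod_cast hG.dist_eq_add_one_of_adj_of_ne_snd hp ((mem_neighborFinset G i k).mp hk) hne
  have hnear : (G.dist p.snd j : ℝ) + 1 = G.dist i j := by
    exact_mod_cast p.dist_snd_add_one hlen hij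
  have hsplit := add_sum_erase _ (fun k => (G.dist k j : ℝ)) hsnd
  have hconst := add_sum_erase _ (fun _ => (G.dist i j : ℝ) + 1) hsnd
  have hdeg :
      ∑ _k ∈ G.neighborFinset i, ((G.dist i j : ℝ) + 1) = G.degree i * (G.dist i j + 1) := by
    rw [sum_const, card_neighborFinset_eq_degree, nsmul_eq_mul]
  rw [sum_congr rfl hfar] at hsplit
  linarith

theorem Connected.isTree_of_sum_two_sub_degree (hG : G.Connected)
    (h : ∑ i, (2 - (G.degree i : ℝ)) = 2) : G.IsTree := by
  classical
  refine isTree_iff_connected_and_card.mpr ⟨hG, ?_⟩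
  rw [sum_sub_distrib, sum_const, card_univ, nsmul_eq_mul, ← Nat.cast_sum,
    sum_degrees_eq_twice_card_edges] at h
  rw [Nat.card_eq_fintype_card, Nat.card_eq_fintype_card, ← edgeFinset_card]
  push_cast at h
  have : ((#G.edgeFinset + 1 : ℕ) : ℝ) = Fintype.card V := by push_cast; linarith
  exact_mod_cast this

variable [DecidableEq V]

noncomputable def distMatrix (G : SimpleGraph V) (R : Type*) [NatCast R] : Matrix V V R :=
  of fun i j => G.dist i j

theorem IsTree.lapMatrix_mul_distMatrix (hG : G.IsTree) :
    G.lapMatrix ℝ * G.distMatrix ℝ + (2 : ℝ) • 1 =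
      vecMulVec (fun i => 2 - (G.degree i : ℝ)) fun _ => 1 := by
  ext i j
  have hcol : (G.lapMatrix ℝ * G.distMatrix ℝ) i j =
      (G.lapMatrix ℝ *ᵥ fun k => (G.dist k j : ℝ)) i := rfl
  rw [Matrix.add_apply, hcol, lapMatrix_mulVec_apply, Matrix.smul_apply, one_apply,
    vecMulVec_apply]
  rcases eq_or_ne i j with rfl | hij
  · rw [sum_dist_neighborFinset_self, dist_self, if_pos rfl]
    simp only [Nat.cast_zero, mul_zero, smul_eq_mul, mul_one]
    ring
  · rw [hG.sum_dist_neighborFinset hij, if_neg hij]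
    simp only [smul_zero, mul_one]
    ring

theorem preconnected_iff_forall_eq_of_lapMatrix_mulVec_eq_zero :
    G.Preconnected ↔ ∀ x : V → ℝ, G.lapMatrix ℝ *ᵥ x = 0 → ∀ u v, x u = x v := by
  refine ⟨fun h x hx u v => (lapMatrix_mulVec_eq_zero_iff_forall_reachable G).mp hx u v (h u v),
    fun h u v => ?_⟩
  classical
  let x : V → ℝ := fun w => if G.Reachable u w then 1 else 0
  have hx : G.lapMatrix ℝ *ᵥ x = 0 :=
    (lapMatrix_mulVec_eq_zero_iff_forall_adj G).mpr fun a b hab =>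
      if_congr ⟨fun h => h.trans hab.reachable, fun h => h.trans hab.symm.reachable⟩ rfl rfl
  by_contra huv
  simpa [x, huv] using h x hx u v

theorem Preconnected.eq_of_lapMatrix_mul_eq (hG : G.Preconnected) {A B : Matrix V V ℝ}
    (h : G.lapMatrix ℝ * A = G.lapMatrix ℝ * B) (hdiag : ∀ j, A j j = B j j) : A = B := by
  ext i j
  have hcol : G.lapMatrix ℝ *ᵥ (fun k => A k j - B k j) = 0 := by
    funext k
    rw [show (fun k => A k j - B k j) = (fun k => A k j) - fun k => B k j from rfl, mulVec_sub,
      Pi.sub_apply, Pi.zero_apply, sub_eq_zero]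
    exact congrFun (congrFun h k) j
  have := preconnected_iff_forall_eq_of_lapMatrix_mulVec_eq_zero.mp hG _ hcol i j
  linarith [hdiag j]

end SimpleGraph

open SimpleGraph in
/-- The bilinear matrix equation `L·D + 2·I = (2·1 − d)·1ᵀ` characterizes trees in terms
of their Laplacian and distance matrices. -/
theorem bilinear_identity_iff_tree_and_distance {n : ℕ} (hn : 1 ≤ n)
    (G : SimpleGraph (Fin n)) [DecidableRel G.Adj]
    (L : Matrix (Fin n) (Fin n) ℝ) (hL : L = G.lapMatrix ℝ)
    (d : Fin n → ℝ) (hd : ∀ i, d i = (G.degree i : ℝ))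
    (D : Matrix (Fin n) (Fin n) ℝ) (hDdiag : ∀ i, D i i = 0) :
    (L * D + (2 : ℝ) • (1 : Matrix (Fin n) (Fin n) ℝ) =
      Matrix.vecMulVec (fun i => 2 - d i) (fun _ => (1 : ℝ))) ↔
    (G.IsTree ∧ ∀ i j, D i j = (G.dist i j : ℝ)) := by
  subst hL
  obtain rfl : d = fun i => (G.degree i : ℝ) := funext hd
  constructor
  · intro h
    have hker (x : Fin n → ℝ) (hx : G.lapMatrix ℝ *ᵥ x = 0) (j : Fin n) :
        2 * x j = x ⬝ᵥ fun i => 2 - (G.degree i : ℝ) :=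
      (isSymm_lapMatrix ℝ G).mul_eq_dotProduct_of_mulVec_eq_zero hx h j
    have hconn : G.Connected :=
      (connected_iff G).mpr ⟨preconnected_iff_forall_eq_of_lapMatrix_mulVec_eq_zero.mpr
        fun x hx u v => by linarith [hker x hx u, hker x hx v], ⟨⟨0, hn⟩⟩⟩
    have hT : G.IsTree := hconn.isTree_of_sum_two_sub_degree <| by
      simpa [dotProduct] using (hker _ (lapMatrix_mulVec_const_eq_zero G) ⟨0, hn⟩).symm
    have hD : D = G.distMatrix ℝ :=
      hconn.preconnected.eq_of_lapMatrix_mul_eq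
        (add_right_cancel (h.trans hT.lapMatrix_mul_distMatrix.symm))
        fun j => by simp [hDdiag, distMatrix]
    exact ⟨hT, fun i j => by rw [hD]; rfl⟩
  · rintro ⟨hT, hD⟩
    obtain rfl : D = G.distMatrix ℝ := Matrix.ext hD
    exact hT.lapMatrix_mul_distMatrix
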